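/- Let p₁, α₁ ∈ ℂ with p₁ ≠ 0 and Re(p₁) ≠ 0. Define η₁(y,s) = p₁ y + s/p₁ and the functions f(y,s) = −1 − (|α₁|² |p₁|⁴ / (4 (p₁ + conj(p₁))²)) e^{η₁ + conj(η₁)} and g(y,s) = −α₁ e^{η₁}. Then f is real-valued and for all (y,s) ∈ ℝ²: f_{sy} g − f_s g_y − f_y g_s + f g_{sy} = f·g and f f_{ss} − f_s² = (1/4)|g|². -/

import Mathlib

open Complex

/-- Partial derivative in the first variable (`y`) of a complex-valued function. -/
noncomputable def pdyC (F : ℝ → ℝ → ℂ) (y s : ℝ) : ℂ := deriv (fun y' => F y' s) y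

/-- Partial derivative in the second variable (`s`) of a complex-valued function. -/
noncomputable def pdsC (F : ℝ → ℝ → ℂ) (y s : ℝ) : ℂ := deriv (fun s' => F y s') s

/-!
Both tau functions are exponentials of affine functions of `(y, s)`, plus the constant `-1` in
`f`, so the bilinear equations reduce to identities between coefficients. For
`F = -1 + A e^(a y + b s)` and `G = B e^(c y + d s)`, `D_s D_y F·G = F G` amounts to `c d = 1` and
`(a - c) (b - d) = 1`. Here `c = p₁`, `d = p₁⁻¹`, `a = p₁ + conj p₁` and
`b = p₁⁻¹ + (conj p₁)⁻¹`, so the second condition reads `conj p₁ · (conj p₁)⁻¹ = 1`. The equation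
for `D_s² f·f` reduces to `C b² = |α₁|² / 4` for the prefactor `C` of `f`, which holds because
`b = a / |p₁|²`.
-/

open ComplexConjugate

lemma pdyC_const_add (B : ℂ) (F : ℝ → ℝ → ℂ) :
    pdyC (fun y s => B + F y s) = pdyC F := by
  funext y s
  exact deriv_const_add B

lemma pdsC_const_add (B : ℂ) (F : ℝ → ℝ → ℂ) :
    pdsC (fun y s => B + F y s) = pdsC F := by
  funext y s
  exact deriv_const_add B

lemma hasDerivAt_const_mul_cexp_mul_add (A a c : ℂ) (t : ℝ) :
    HasDerivAt (fun t' : ℝ => A * cexp (a * t' + c)) (A * a * cexp (a * t + c)) t := by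
  have h : HasDerivAt (fun t' : ℝ => a * (t' : ℂ) + c) a t := by
    simpa using ((ofRealCLM.hasDerivAt (x := t)).const_mul a).add_const c
  exact (h.cexp.const_mul A).congr_deriv (by ring)

lemma pdyC_const_mul_cexp (A a b : ℂ) :
    pdyC (fun (y s : ℝ) => A * cexp (a * y + b * s))
      = fun (y s : ℝ) => A * a * cexp (a * y + b * s) := by
  funext y s
  exact (hasDerivAt_const_mul_cexp_mul_add A a (b * s) y).deriv

lemma pdsC_const_mul_cexp (A a b : ℂ) :
    pdsC (fun (y s : ℝ) => A * cexp (a * y + b * s))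
      = fun (y s : ℝ) => A * b * cexp (a * y + b * s) := by
  funext y s
  simp only [pdsC, add_comm (a * _)]
  exact (hasDerivAt_const_mul_cexp_mul_add A b (a * y) s).deriv

lemma sq_norm_cexp (z : ℂ) : (‖cexp z‖ : ℂ) ^ 2 = cexp (z + conj z) := by
  rw [exp_add, exp_conj, mul_conj']

lemma pdyC_pdsC_bilinear_eq_mul (A B a b c d : ℂ) (hcd : c * d = 1)
    (hac : (a - c) * (b - d) = 1) (F G : ℝ → ℝ → ℂ)
    (hF : F = fun (y s : ℝ) => -1 + A * cexp (a * y + b * s))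
    (hG : G = fun (y s : ℝ) => B * cexp (c * y + d * s)) (y s : ℝ) :
    pdyC (pdsC F) y s * G y s - pdsC F y s * pdyC G y s
        - pdyC F y s * pdsC G y s + F y s * pdyC (pdsC G) y s = F y s * G y s := by
  subst hF hG
  simp only [pdyC_const_add, pdsC_const_add, pdyC_const_mul_cexp, pdsC_const_mul_cexp]
  linear_combination A * B * cexp (a * y + b * s) * cexp (c * y + d * s) * hac
    - B * cexp (c * y + d * s) * hcd

lemma mul_pdsC_pdsC_sub_sq (A B a b : ℂ) (F : ℝ → ℝ → ℂ)
    (hF : F = fun (y s : ℝ) => B + A * cexp (a * y + b * s)) (y s : ℝ) :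
    F y s * pdsC (pdsC F) y s - pdsC F y s ^ 2 = B * A * b ^ 2 * cexp (a * y + b * s) := by
  subst hF
  simp only [pdsC_const_add, pdsC_const_mul_cexp]
  ring

theorem csp_one_soliton_tau
    (p₁ α₁ : ℂ) (hp₁ : p₁ ≠ 0) (hre : p₁.re ≠ 0)
    (η₁ : ℝ → ℝ → ℂ) (hη₁ : ∀ y s, η₁ y s = p₁ * (y : ℂ) + (s : ℂ) / p₁)
    (f g : ℝ → ℝ → ℂ)
    (hf : ∀ y s, f y s = -1 -
      ((‖α₁‖ : ℂ)^2 * (‖p₁‖ : ℂ)^4 / (4 * (p₁ + starRingEnd ℂ p₁)^2))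
        * Complex.exp (η₁ y s + starRingEnd ℂ (η₁ y s)))
    (hg : ∀ y s, g y s = -α₁ * Complex.exp (η₁ y s)) :
    (∀ y s, (f y s).im = 0) ∧
    (∀ y s,
      (pdyC (pdsC f) y s * g y s - pdsC f y s * pdyC g y s
          - pdyC f y s * pdsC g y s + f y s * pdyC (pdsC g) y s
        = f y s * g y s)
      ∧ (f y s * pdsC (pdsC f) y s - (pdsC f y s)^2
        = (1/4) * (‖g y s‖ : ℂ)^2)) := by
  set P := conj p₁
  have hP : P ≠ 0 := (map_ne_zero _).mpr hp₁
  have hu : p₁ + P ≠ 0 := by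
    rw [add_conj]
    exact_mod_cast mul_ne_zero two_ne_zero hre
  set C := (‖α₁‖ : ℂ) ^ 2 * (‖p₁‖ : ℂ) ^ 4 / (4 * (p₁ + P) ^ 2)
  have hexp : ∀ y s : ℝ, η₁ y s + conj (η₁ y s) = (p₁ + P) * y + (p₁⁻¹ + P⁻¹) * s := by
    intro y s
    simp only [hη₁, map_add, map_mul, map_div₀, conj_ofReal, P]
    ring
  have hf' : f = fun (y s : ℝ) => -1 + -C * cexp ((p₁ + P) * y + (p₁⁻¹ + P⁻¹) * s) := by
    funext y s
    rw [hf, hexp]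
    ring
  have hg' : g = fun (y s : ℝ) => -α₁ * cexp (p₁ * y + p₁⁻¹ * s) := by
    funext y s
    rw [hg, hη₁, div_eq_inv_mul]
  refine ⟨fun y s => ?_, fun y s => ⟨?_, ?_⟩⟩
  · rw [hf, ← sq_norm_cexp]
    simp only [C, P, add_conj]
    norm_cast
  · have hac : (p₁ + P - p₁) * (p₁⁻¹ + P⁻¹ - p₁⁻¹) = 1 := by
      rw [add_sub_cancel_left, add_sub_cancel_left, mul_inv_cancel₀ hP]
    exact pdyC_pdsC_bilinear_eq_mul _ _ _ _ _ _ (mul_inv_cancel₀ hp₁) hac f g hf' hg' y s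
  · have hC : C * (p₁⁻¹ + P⁻¹) ^ 2 = (‖α₁‖ : ℂ) ^ 2 / 4 := by
      have hnorm : (‖p₁‖ : ℂ) ^ 4 = (p₁ * P) ^ 2 := by rw [mul_conj']; ring
      simp only [C, hnorm]
      field_simp
      ring
    rw [mul_pdsC_pdsC_sub_sq _ _ _ _ f hf', hg, norm_mul, norm_neg, ofReal_mul, mul_pow,
      sq_norm_cexp, hexp]
    linear_combination cexp ((p₁ + P) * y + (p₁⁻¹ + P⁻¹) * s) * hC
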